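/- Let ν_l be the Student's t-density with parameter μ > 0, CDF F and inverse F^{-1}: (0,1) → ℝ. For each n ≥ 1 there exists a constant C = C(μ,n) such that, as u → 0⁺, |dⁿ/duⁿ F^{-1}(u)| ≤ C u^{-(μn+1)/μ}, and as u → 1⁻, |dⁿ/duⁿ F^{-1}(u)| ≤ C (1-u)^{-(μn+1)/μ}. -/

import Mathlib

/-!
On `(0, 1)` the quantile function `y = F⁻¹` solves `y' = 1 / ν(y) = c⁻¹ (1 + y²)^((μ+1)/2)`.
Differentiating this autonomous equation shows inductively that `y⁽ⁿ⁾ = Pₙ(y) (1 + y²)^(n(μ-1)/2 + 1)`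
with `deg Pₙ ≤ n - 1`, so `|y⁽ⁿ⁾| ≤ C (1 + y²)^((μn+1)/2)`. Both tails of the Student distribution
are `O(|x|^(-μ))`, i.e. `(1 + y²)^(μ/2) · min(u, 1 - u) ≤ K` at `y = F⁻¹(u)`; raising this to the
power `(μn+1)/μ` gives the bound.
-/

open MeasureTheory Real Set Filter Topology Polynomial

lemma Polynomial.abs_eval_le_mul_one_add_sq_rpow (P : ℝ[X]) {d : ℕ} (hd : P.natDegree ≤ d) :
    ∃ C, 0 < C ∧ ∀ x : ℝ, |P.eval x| ≤ C * (1 + x ^ 2) ^ ((d : ℝ) / 2) := by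
  refine ⟨∑ i ∈ Finset.range (P.natDegree + 1), |P.coeff i| + 1, by positivity, fun x => ?_⟩
  set s := √(1 + x ^ 2) with hs_def
  have hs : (1 + x ^ 2) ^ ((d : ℝ) / 2) = s ^ d := by
    rw [hs_def, sqrt_eq_rpow, ← rpow_mul_natCast (by positivity)]
    ring_nf
  have h1s : 1 ≤ s := one_le_sqrt.2 (by nlinarith)
  have hxs : |x| ≤ s := by
    rw [← sqrt_sq_eq_abs]
    exact sqrt_le_sqrt (by linarith)
  have hpow : ∀ i ∈ Finset.range (P.natDegree + 1), |P.coeff i * x ^ i| ≤ |P.coeff i| * s ^ d :=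
    fun i hi => by
      rw [abs_mul, abs_pow]
      gcongr
      exact (pow_le_pow_left₀ (abs_nonneg x) hxs i).trans
        (pow_le_pow_right₀ h1s (by have := Finset.mem_range.1 hi; omega))
  rw [hs, eval_eq_sum_range]
  calc |∑ i ∈ Finset.range (P.natDegree + 1), P.coeff i * x ^ i|
      ≤ ∑ i ∈ Finset.range (P.natDegree + 1), |P.coeff i| * s ^ d :=
        (Finset.abs_sum_le_sum_abs _ _).trans (Finset.sum_le_sum hpow)
    _ ≤ _ := by rw [← Finset.sum_mul]; gcongr; linarith

lemma hasDerivAt_eval_comp_mul_one_add_sq_rpow {g : ℝ → ℝ} {u a β : ℝ}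
    (hg : HasDerivAt g (a * (1 + g u ^ 2) ^ β) u) (P : ℝ[X]) (α : ℝ) :
    HasDerivAt (fun v => P.eval (g v) * (1 + g v ^ 2) ^ α)
      ((C a * (derivative P * (1 + X ^ 2) + C (2 * α) * X * P)).eval (g u) *
        (1 + g u ^ 2) ^ (α + β - 1)) u := by
  have hA : 0 < 1 + g u ^ 2 := by positivity
  have hsq : HasDerivAt (fun v => 1 + g v ^ 2) (2 * g u * (a * (1 + g u ^ 2) ^ β)) u := by
    simpa using (hg.pow 2).const_add 1
  refine (((P.hasDerivAt (g u)).comp u hg).mul (hsq.rpow_const (Or.inl hA.ne'))).congr_deriv ?_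
  have e1 : (1 + g u ^ 2) ^ α * (1 + g u ^ 2) ^ β
      = (1 + g u ^ 2) ^ (α + β - 1) * (1 + g u ^ 2) := by
    rw [← rpow_add hA, ← rpow_add_one hA.ne']; ring_nf
  have e2 : (1 + g u ^ 2) ^ (α - 1) * (1 + g u ^ 2) ^ β = (1 + g u ^ 2) ^ (α + β - 1) := by
    rw [← rpow_add hA]; ring_nf
  simp only [eval_mul, eval_add, eval_C, eval_X, eval_pow, eval_one, Function.comp_apply]
  linear_combination (a * (derivative P).eval (g u)) * e1 + (2 * α * g u * a * P.eval (g u)) * e2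

lemma iteratedDeriv_eq_eval_mul_one_add_sq_rpow {g : ℝ → ℝ} {U : Set ℝ} (hU : IsOpen U)
    {a β : ℝ} (hg : ∀ u ∈ U, HasDerivAt g (a * (1 + g u ^ 2) ^ β) u) {n : ℕ} (hn : 1 ≤ n) :
    ∃ P : ℝ[X], P.natDegree ≤ n - 1 ∧ ∀ u ∈ U,
      iteratedDeriv n g u = P.eval (g u) * (1 + g u ^ 2) ^ (n * (β - 1) + 1) := by
  induction n, hn using Nat.le_induction with
  | base =>
    refine ⟨C a, by simp, fun u hu => ?_⟩
    simp [(hg u hu).deriv]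
  | succ m hm ih =>
    obtain ⟨P, hPdeg, hP⟩ := ih
    set α : ℝ := m * (β - 1) + 1
    refine ⟨C a * (derivative P * (1 + X ^ 2) + C (2 * α) * X * P), ?_, fun u hu => ?_⟩
    · have h1 : (derivative P * (1 + X ^ 2)).natDegree ≤ m := by
        rcases Nat.eq_zero_or_pos P.natDegree with h0 | h0
        · simp [derivative_of_natDegree_zero h0]
        · refine natDegree_mul_le.trans ?_
          have := natDegree_derivative_le P
          have : (1 + X ^ 2 : ℝ[X]).natDegree ≤ 2 := by compute_degree
          omega
      have h2 : (C (2 * α) * X * P).natDegree ≤ m := by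
        refine natDegree_mul_le.trans ?_
        have : (C (2 * α) * X : ℝ[X]).natDegree ≤ 1 := by compute_degree
        omega
      refine (natDegree_C_mul_le _ _).trans ?_
      exact (natDegree_add_le _ _).trans (by omega)
    · have hev : iteratedDeriv m g =ᶠ[nhds u] fun v => P.eval (g v) * (1 + g v ^ 2) ^ α :=
        eventually_of_mem (hU.mem_nhds hu) hP
      rw [iteratedDeriv_succ, hev.deriv_eq,
        (hasDerivAt_eval_comp_mul_one_add_sq_rpow (hg u hu) P α).deriv]
      congr 2
      push_cast
      ring

lemma abs_iteratedDeriv_le_mul_one_add_sq_rpow {g : ℝ → ℝ} {U : Set ℝ} (hU : IsOpen U)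
    {a β : ℝ} (hg : ∀ u ∈ U, HasDerivAt g (a * (1 + g u ^ 2) ^ β) u) {n : ℕ} (hn : 1 ≤ n) :
    ∃ C, 0 < C ∧ ∀ u ∈ U,
      |iteratedDeriv n g u| ≤ C * (1 + g u ^ 2) ^ ((n * (2 * β - 1) + 1) / 2) := by
  obtain ⟨P, hPdeg, hP⟩ := iteratedDeriv_eq_eval_mul_one_add_sq_rpow hU hg hn
  obtain ⟨C, hC, hPb⟩ := P.abs_eval_le_mul_one_add_sq_rpow hPdeg
  refine ⟨C, hC, fun u hu => ?_⟩
  have hA : 0 < 1 + g u ^ 2 := by positivity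
  rw [hP u hu, abs_mul, abs_of_pos (rpow_pos_of_pos hA _)]
  calc |P.eval (g u)| * (1 + g u ^ 2) ^ (n * (β - 1) + 1)
      ≤ C * (1 + g u ^ 2) ^ (((n - 1 : ℕ) : ℝ) / 2) * (1 + g u ^ 2) ^ (n * (β - 1) + 1) := by
        gcongr
        exact hPb _
    _ = _ := by
        rw [mul_assoc, ← rpow_add hA, Nat.cast_sub hn]
        ring_nf

section CDF

variable {ν F : ℝ → ℝ} (hF : ∀ x, F x = ∫ t in Iic x, ν t)
include hF

lemma hasDerivAt_of_eq_integral_Iic (hνc : Continuous ν) (hνi : Integrable ν) (x : ℝ) :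
    HasDerivAt F (ν x) x := by
  have hF0 : F = fun y => (∫ t in (0 : ℝ)..y, ν t) + F 0 := by
    funext y
    rw [hF, hF, ← intervalIntegral.integral_Iic_sub_Iic hνi.integrableOn hνi.integrableOn]
    ring
  rw [hF0]
  exact (intervalIntegral.integral_hasDerivAt_right hνi.intervalIntegrable
    hνc.stronglyMeasurable.stronglyMeasurableAtFilter hνc.continuousAt).add_const _

lemma strictMono_of_eq_integral_Iic (hνi : Integrable ν) (hνp : ∀ x, 0 < ν x) : StrictMono F :=
  fun x y hxy => by
    have hpos := intervalIntegral.intervalIntegral_pos_of_pos hνi.intervalIntegrable hνp hxy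
    rw [← intervalIntegral.integral_Iic_sub_Iic hνi.integrableOn hνi.integrableOn, ← hF, ← hF]
      at hpos
    linarith

lemma one_le_integral_of_Ioo_subset_range (hνi : Integrable ν) (hν : 0 ≤ ν)
    (hrange : Ioo 0 1 ⊆ range F) : 1 ≤ ∫ t, ν t := by
  refine le_of_forall_lt_imp_le_of_dense fun u hu => ?_
  obtain ⟨x, hx⟩ := hrange (⟨by positivity, max_lt hu (by norm_num)⟩ : max u (1 / 2) ∈ Ioo 0 1)
  calc u ≤ max u (1 / 2) := le_max_left _ _
    _ = ∫ t in Iic x, ν t := by rw [← hx, hF]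
    _ ≤ ∫ t, ν t := setIntegral_le_integral hνi (Eventually.of_forall hν)

end CDF

section LeftInverse

variable {F G : ℝ → ℝ} {s : Set ℝ} (hs : IsOpen s) (hFc : Continuous F) (hFm : StrictMono F)
  (hGF : ∀ x, G (F x) = x) (hFG : ∀ u ∈ s, F (G u) = u)
include hs hFc hFm hGF hFG

lemma continuousAt_of_leftInverse {u : ℝ} (hu : u ∈ s) : ContinuousAt G u := by
  have hmono : MonotoneOn G s := fun v hv w hw hvw => by
    rwa [← hFm.le_iff_le, hFG v hv, hFG w hw]
  have himage : F ⁻¹' s ⊆ G '' s := fun y hy => ⟨F y, hy, hGF y⟩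
  refine continuousAt_of_monotoneOn_of_image_mem_nhds hmono (hs.mem_nhds hu)
    (Filter.mem_of_superset ((hs.preimage hFc).mem_nhds ?_) himage)
  simpa [mem_preimage, hFG u hu] using hu

lemma hasDerivAt_of_leftInverse {u f' : ℝ} (hu : u ∈ s) (hF' : HasDerivAt F f' (G u))
    (hf' : f' ≠ 0) : HasDerivAt G f'⁻¹ u :=
  hF'.of_local_left_inverse (continuousAt_of_leftInverse hs hFc hFm hGF hFG hu) hf'
    (Filter.mem_of_superset (hs.mem_nhds hu) hFG)

end LeftInverse

section StudentTails

variable {μ : ℝ} (hμ : 0 < μ)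
include hμ

lemma integrable_one_add_sq_rpow : Integrable fun t : ℝ => (1 + t ^ 2) ^ (-(μ + 1) / 2) := by
  have := integrable_rpow_neg_one_add_norm_sq (E := ℝ) (μ := volume) (r := μ + 1)
    (by simp; linarith)
  simpa [Real.norm_eq_abs, sq_abs, neg_div] using this

lemma integral_Ioi_one_add_sq_rpow_le {x : ℝ} (hx : 0 < x) :
    ∫ t in Ioi x, (1 + t ^ 2) ^ (-(μ + 1) / 2) ≤ x ^ (-μ) / μ := by
  have hexp : -(μ + 1) < -1 := by linarith
  calc ∫ t in Ioi x, (1 + t ^ 2) ^ (-(μ + 1) / 2)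
      ≤ ∫ t in Ioi x, t ^ (-(μ + 1)) := by
        refine setIntegral_mono_on (integrable_one_add_sq_rpow hμ).integrableOn
          (integrableOn_Ioi_rpow_of_lt hexp hx) measurableSet_Ioi fun t ht => ?_
        have ht : 0 < t := hx.trans ht
        rw [show t ^ (-(μ + 1)) = (t ^ 2) ^ (-(μ + 1) / 2) by
          rw [← rpow_natCast, ← rpow_mul ht.le]; ring_nf]
        exact rpow_le_rpow_of_nonpos (by positivity) (by linarith) (by linarith)
    _ = x ^ (-μ) / μ := by
        rw [integral_Ioi_rpow_of_lt hexp hx]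
        ring_nf

end StudentTails

lemma integral_Iic_one_add_sq_rpow_eq_integral_Ioi_neg (p x : ℝ) :
    ∫ t in Iic x, (1 + t ^ 2) ^ p = ∫ t in Ioi (-x), (1 + t ^ 2) ^ p := by
  rw [← integral_comp_neg_Iic]
  simp only [neg_sq]

lemma min_integral_Iic_Ioi_one_add_sq_rpow_le {μ x : ℝ} (hμ : 0 < μ) (hx : x ≠ 0) :
    min (∫ t in Iic x, (1 + t ^ 2) ^ (-(μ + 1) / 2)) (∫ t in Ioi x, (1 + t ^ 2) ^ (-(μ + 1) / 2))
      ≤ |x| ^ (-μ) / μ := by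
  rcases hx.lt_or_gt with hx | hx
  · rw [abs_of_neg hx, integral_Iic_one_add_sq_rpow_eq_integral_Ioi_neg]
    exact min_le_of_left_le (integral_Ioi_one_add_sq_rpow_le hμ (neg_pos.2 hx))
  · rw [abs_of_pos hx]
    exact min_le_of_right_le (integral_Ioi_one_add_sq_rpow_le hμ hx)

lemma exists_one_add_sq_rpow_mul_min_integral_Iic_Ioi_le {μ : ℝ} (hμ : 0 < μ) :
    ∃ K, 0 < K ∧ ∀ x : ℝ, (1 + x ^ 2) ^ (μ / 2) *
      min (∫ t in Iic x, (1 + t ^ 2) ^ (-(μ + 1) / 2)) (∫ t in Ioi x, (1 + t ^ 2) ^ (-(μ + 1) / 2))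
        ≤ K := by
  set T := ∫ t : ℝ, (1 + t ^ 2) ^ (-(μ + 1) / 2)
  have hT : 0 ≤ T := integral_nonneg fun t => by positivity
  refine ⟨2 ^ (μ / 2) * (1 / μ + T), by positivity, fun x => ?_⟩
  set m := min (∫ t in Iic x, (1 + t ^ 2) ^ (-(μ + 1) / 2))
    (∫ t in Ioi x, (1 + t ^ 2) ^ (-(μ + 1) / 2))
  have hm : 0 ≤ m := le_min (setIntegral_nonneg measurableSet_Iic fun t _ => by positivity)
    (setIntegral_nonneg measurableSet_Ioi fun t _ => by positivity)
  rcases le_or_gt |x| 1 with hx | hx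
  · have hmT : m ≤ T := min_le_of_right_le <| setIntegral_le_integral
      (integrable_one_add_sq_rpow hμ) (Eventually.of_forall fun t => by positivity)
    have h2 : (1 + x ^ 2) ^ (μ / 2) ≤ 2 ^ (μ / 2) := by
      gcongr
      nlinarith [sq_abs x, abs_nonneg x]
    calc (1 + x ^ 2) ^ (μ / 2) * m ≤ 2 ^ (μ / 2) * T := by gcongr
      _ ≤ _ := by gcongr; simp only [le_add_iff_nonneg_left]; positivity
  · have hx0 : 0 < |x| := by linarith
    have h2 : (1 + x ^ 2) ^ (μ / 2) ≤ 2 ^ (μ / 2) * |x| ^ μ := by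
      rw [show |x| ^ μ = (|x| ^ 2) ^ (μ / 2) by rw [← rpow_natCast, ← rpow_mul hx0.le]; ring_nf,
        ← mul_rpow (by norm_num) (by positivity)]
      gcongr
      nlinarith [sq_abs x]
    calc (1 + x ^ 2) ^ (μ / 2) * m ≤ (2 ^ (μ / 2) * |x| ^ μ) * (|x| ^ (-μ) / μ) := by
          gcongr
          exact min_integral_Iic_Ioi_one_add_sq_rpow_le hμ (abs_pos.1 hx0)
      _ = 2 ^ (μ / 2) * (1 / μ) := by
          rw [rpow_neg hx0.le]
          field_simp
      _ ≤ _ := by gcongr; linarith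

lemma exists_one_add_sq_rpow_mul_min_le_of_eq_integral_Iic {μ c : ℝ} (hμ : 0 < μ) (hc : 0 < c)
    {F : ℝ → ℝ} (hF : ∀ x, F x = ∫ t in Iic x, c * (1 + t ^ 2) ^ (-(μ + 1) / 2))
    (hrange : Ioo 0 1 ⊆ range F) :
    ∃ K, 0 < K ∧ ∀ x, (1 + x ^ 2) ^ (μ / 2) * min (F x) (1 - F x) ≤ K := by
  have hi := integrable_one_add_sq_rpow hμ
  have hmass := one_le_integral_of_Ioo_subset_range hF (hi.const_mul c)
    (fun t => by positivity) hrange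
  obtain ⟨K, hK, htail⟩ := exists_one_add_sq_rpow_mul_min_integral_Iic_Ioi_le hμ
  refine ⟨c * K, by positivity, fun x => ?_⟩
  have hright : 1 - F x ≤ c * ∫ t in Ioi x, (1 + t ^ 2) ^ (-(μ + 1) / 2) := by
    rw [← integral_const_mul]
    have := intervalIntegral.integral_Iic_add_Ioi (hi.const_mul c).integrableOn
      (hi.const_mul c).integrableOn (b := x)
    rw [← hF] at this
    linarith
  have hleft : F x = c * ∫ t in Iic x, (1 + t ^ 2) ^ (-(μ + 1) / 2) := by
    rw [hF, integral_const_mul]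
  calc (1 + x ^ 2) ^ (μ / 2) * min (F x) (1 - F x)
      ≤ (1 + x ^ 2) ^ (μ / 2) * (c * min (∫ t in Iic x, (1 + t ^ 2) ^ (-(μ + 1) / 2))
          (∫ t in Ioi x, (1 + t ^ 2) ^ (-(μ + 1) / 2))) := by
        rw [mul_min_of_nonneg _ _ hc.le]
        gcongr
        exact hleft.le
    _ ≤ c * K := by
        rw [mul_left_comm]
        exact mul_le_mul_of_nonneg_left (htail x) hc.le

lemma rpow_mul_le_of_rpow_mul_le {A s K a r : ℝ} (hA : 0 ≤ A) (hs : 0 < s) (hr : 0 ≤ r)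
    (h : A ^ a * s ≤ K) : A ^ (a * r) ≤ K ^ r * s ^ (-r) := by
  rw [rpow_mul hA, rpow_neg hs.le, ← div_eq_mul_inv, ← div_rpow _ hs.le]
  · exact rpow_le_rpow (by positivity) ((le_div_iff₀ hs).2 h) hr
  · exact (mul_nonneg (rpow_nonneg hA a) hs.le).trans h

lemma eventually_le_of_forall_le_min_rpow {f : ℝ → ℝ} {C r : ℝ}
    (h : ∀ u ∈ Ioo (0 : ℝ) 1, f u ≤ C * min u (1 - u) ^ r) :
    (∀ᶠ u in 𝓝[>] 0, f u ≤ C * u ^ r) ∧ (∀ᶠ u in 𝓝[<] 1, f u ≤ C * (1 - u) ^ r) := by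
  constructor
  · filter_upwards [Ioo_mem_nhdsGT (by norm_num : (0 : ℝ) < 1 / 2)] with u hu
    simpa [min_eq_left (by linarith [hu.2] : u ≤ 1 - u)] using h u ⟨hu.1, by linarith [hu.2]⟩
  · filter_upwards [Ioo_mem_nhdsLT (by norm_num : (1 / 2 : ℝ) < 1)] with u hu
    simpa [min_eq_right (by linarith [hu.1] : 1 - u ≤ u)] using h u ⟨by linarith [hu.1], hu.2⟩

theorem stmt_7 (μ cμ : ℝ) (hμ : 0 < μ)
    (hc : cμ = Real.Gamma ((μ+1)/2) / (Real.Gamma (μ/2) * Real.sqrt Real.pi))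
    (ν : ℝ → ℝ) (hν : ∀ x, ν x = cμ * (1 + x^2) ^ (-(μ+1)/2))
    (F : ℝ → ℝ) (hF : ∀ x, F x = ∫ t in Set.Iic x, ν t)
    (Finv : ℝ → ℝ)
    (hFinv : ∀ u ∈ Set.Ioo (0:ℝ) 1, F (Finv u) = u)
    (hFinv' : ∀ x, Finv (F x) = x)
    (n : ℕ) (hn : 1 ≤ n) :
    ∃ C : ℝ, 0 < C ∧
      (∀ᶠ u in nhdsWithin 0 (Set.Ioi (0:ℝ)),
        |iteratedDeriv n Finv u| ≤ C * u ^ (-(μ * n + 1)/μ)) ∧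
      (∀ᶠ u in nhdsWithin 1 (Set.Iio (1:ℝ)),
        |iteratedDeriv n Finv u| ≤ C * (1 - u) ^ (-(μ * n + 1)/μ)) := by
  obtain rfl : ν = fun t => cμ * (1 + t ^ 2) ^ (-(μ + 1) / 2) := funext hν
  have hcμ : 0 < cμ := by
    rw [hc]
    have := Gamma_pos_of_pos (by linarith : 0 < (μ + 1) / 2)
    have := Gamma_pos_of_pos (by linarith : 0 < μ / 2)
    positivity
  have hνi := (integrable_one_add_sq_rpow hμ).const_mul cμ
  have hνc : Continuous fun t : ℝ => cμ * (1 + t ^ 2) ^ (-(μ + 1) / 2) :=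
    continuous_const.mul <| ((continuous_pow 2).const_add 1).rpow_const
      fun t => Or.inl (by positivity)
  have hFd := hasDerivAt_of_eq_integral_Iic hF hνc hνi
  have hFinvd : ∀ u ∈ Ioo (0 : ℝ) 1,
      HasDerivAt Finv (cμ⁻¹ * (1 + Finv u ^ 2) ^ ((μ + 1) / 2)) u := fun u hu => by
    convert hasDerivAt_of_leftInverse isOpen_Ioo
      (continuous_iff_continuousAt.2 fun x => (hFd x).continuousAt)
      (strictMono_of_eq_integral_Iic hF hνi fun x => by positivity) hFinv' hFinv hu
      (hFd (Finv u)) (by positivity) using 1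
    rw [mul_inv, ← rpow_neg (by positivity), neg_div, neg_neg]
  obtain ⟨Cp, hCp, hD⟩ := abs_iteratedDeriv_le_mul_one_add_sq_rpow isOpen_Ioo hFinvd hn
  obtain ⟨K, hK, htail⟩ := exists_one_add_sq_rpow_mul_min_le_of_eq_integral_Iic hμ hcμ hF
    fun u hu => ⟨Finv u, hFinv u hu⟩
  rw [neg_div]
  set r := (μ * n + 1) / μ with hr
  refine ⟨Cp * K ^ r, by positivity, ?_⟩
  refine eventually_le_of_forall_le_min_rpow fun u hu => ?_
  calc |iteratedDeriv n Finv u| ≤ Cp * (1 + Finv u ^ 2) ^ (μ / 2 * r) := by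
        convert hD u hu using 3
        rw [hr]
        field_simp
        ring
    _ ≤ Cp * (K ^ r * min u (1 - u) ^ (-r)) := by
        gcongr
        refine rpow_mul_le_of_rpow_mul_le (by positivity) (lt_min hu.1 (sub_pos.2 hu.2))
          (by positivity) ?_
        simpa only [hFinv u hu] using htail (Finv u)
    _ = Cp * K ^ r * min u (1 - u) ^ (-r) := by ring
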